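/- The function g(ρ) = (1/(1-2ρ))·ln((1-ρ)/ρ) (extended by g(1/2)=2) is continuous on (0,1) and strictly decreasing on (0,1/2]. -/

import Mathlib

/-!
Substituting `t = 1 - 2ρ` gives `g ρ = L t / t` with `L t = log (1 + t) - log (1 - t)`, and the
value `g (1/2) = 2` is `L' 0`: so `g ρ` is the difference quotient `dslope L 0 t`, which is
continuous because `L` is differentiable at `0`. Dividing the series
`L t = ∑ 2 t^(2k+1) / (2k+1)` by `t` gives `∑ 2 t^(2k) / (2k+1)`, visibly strictly increasing
in `t ∈ [0, 1)`, and `ρ ↦ 1 - 2ρ` maps `(0, 1/2]` decreasingly onto `[0, 1)`.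
-/

/-- The function `g` from the paper: `g ρ = (1/(1-2ρ))·ln((1-ρ)/ρ)` for `ρ ≠ 1/2`,
and `g (1/2) = 2`. -/
noncomputable def g (ρ : ℝ) : ℝ :=
  if ρ = 1/2 then 2 else (1 / (1 - 2*ρ)) * Real.log ((1 - ρ) / ρ)

open Real Set

noncomputable def logRatio (t : ℝ) : ℝ := log (1 + t) - log (1 - t)

lemma hasDerivAt_logRatio_zero : HasDerivAt logRatio 2 0 := by
  have h₁ : HasDerivAt (fun t : ℝ => log (1 + t)) 1 0 := by
    simpa using ((hasDerivAt_id (0 : ℝ)).const_add 1).log (by norm_num)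
  have h₂ : HasDerivAt (fun t : ℝ => log (1 - t)) (-1) 0 := by
    simpa using ((hasDerivAt_id (0 : ℝ)).const_sub 1).log (by norm_num)
  exact (h₁.sub h₂).congr_deriv (by norm_num)

lemma continuousOn_logRatio : ContinuousOn logRatio (Ioo (-1) 1) := by
  have h₁ : ContinuousOn (fun t : ℝ => log (1 + t)) (Ioo (-1) 1) :=
    ContinuousOn.log (by fun_prop) fun t ht => by linarith [ht.1]
  have h₂ : ContinuousOn (fun t : ℝ => log (1 - t)) (Ioo (-1) 1) :=
    ContinuousOn.log (by fun_prop) fun t ht => by linarith [ht.2]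
  exact h₁.sub h₂

lemma hasSum_dslope_logRatio {t : ℝ} (ht : |t| < 1) :
    HasSum (fun k : ℕ => 2 / (2 * k + 1) * t ^ (2 * k)) (dslope logRatio 0 t) := by
  rcases eq_or_ne t 0 with rfl | ht₀
  · rw [dslope_same, hasDerivAt_logRatio_zero.deriv]
    convert hasSum_ite_eq 0 (2 : ℝ) using 2 with k
    rcases eq_or_ne k 0 with rfl | hk <;> simp [*]
  · have hL₀ : logRatio 0 = 0 := by simp [logRatio]
    rw [dslope_of_ne _ ht₀, slope_def_field, hL₀, sub_zero, sub_zero]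
    refine ((hasSum_log_sub_log_of_abs_lt_one ht).div_const t).congr_fun fun k => ?_
    rw [pow_succ, mul_div_assoc, mul_div_cancel_right₀ _ ht₀, mul_one_div]

lemma strictMonoOn_dslope_logRatio : StrictMonoOn (dslope logRatio 0) (Ico 0 1) := by
  intro s hs t ht hst
  have hs' : |s| < 1 := abs_lt.2 ⟨by linarith [hs.1], hs.2⟩
  have ht' : |t| < 1 := abs_lt.2 ⟨by linarith [hs.1], ht.2⟩
  refine hasSum_lt (i := 1) (fun k => ?_) ?_ (hasSum_dslope_logRatio hs')
    (hasSum_dslope_logRatio ht')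
  · gcongr
    exact hs.1
  · have : s ^ 2 < t ^ 2 := by gcongr; exact hs.1
    simp only [Nat.cast_one, mul_one]
    gcongr

lemma continuousOn_dslope_logRatio : ContinuousOn (dslope logRatio 0) (Ioo (-1) 1) :=
  (continuousOn_dslope (Ioo_mem_nhds (by norm_num) (by norm_num))).2
    ⟨continuousOn_logRatio, hasDerivAt_logRatio_zero.differentiableAt⟩

lemma g_eq_dslope_logRatio {ρ : ℝ} (h₀ : ρ ≠ 0) (h₁ : ρ ≠ 1) :
    g ρ = dslope logRatio 0 (1 - 2 * ρ) := by
  rcases eq_or_ne ρ (1 / 2) with rfl | hρ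
  · norm_num [g, dslope_same, hasDerivAt_logRatio_zero.deriv]
  · have ht : 1 - 2 * ρ ≠ 0 := fun h => hρ (by linarith)
    rw [g, if_neg hρ, dslope_of_ne _ ht, slope_def_field, logRatio, logRatio]
    rw [show (1 : ℝ) + (1 - 2 * ρ) = 2 * (1 - ρ) by ring, show (1 : ℝ) - (1 - 2 * ρ) = 2 * ρ by ring,
      log_mul two_ne_zero (sub_ne_zero.2 h₁.symm), log_mul two_ne_zero h₀,
      log_div (sub_ne_zero.2 h₁.symm) h₀]
    norm_num
    ring

/-- `g` is continuous on `(0,1)` and strictly decreasing on `(0,1/2]`. -/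
theorem stmt_1 :
    ContinuousOn g (Set.Ioo (0:ℝ) 1) ∧ StrictAntiOn g (Set.Ioc (0:ℝ) (1/2)) := by
  have hg : EqOn g (fun ρ => dslope logRatio 0 (1 - 2 * ρ)) (Ioo 0 1) :=
    fun ρ hρ => g_eq_dslope_logRatio hρ.1.ne' hρ.2.ne
  constructor
  · refine (continuousOn_dslope_logRatio.comp (by fun_prop) fun ρ hρ => ?_).congr hg
    exact ⟨by linarith [hρ.2], by linarith [hρ.1]⟩
  · intro ρ hρ σ hσ hlt
    rw [hg ⟨hρ.1, by linarith [hρ.2]⟩, hg ⟨hσ.1, by linarith [hσ.2]⟩]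
    exact strictMonoOn_dslope_logRatio ⟨by linarith [hσ.2], by linarith [hσ.1]⟩
      ⟨by linarith [hρ.2], by linarith [hρ.1]⟩ (by linarith)
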